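/- Let C be a nonempty finite set and v a symmetric valuation on C. Then there exists a matching μ of C such that (1/|C|)·Σ_{{i,j}⊆C, i≠j} v i j ≤ SW(μ), where the sum ranges over all unordered pairs of distinct elements of C. (Equivalently, the 'uniform fractional matching' that puts weight 1/|C| on every pair is dominated by some matching; in particular, a maximum weight matching of C has weight at least half of SW(C).) -/

import Mathlib

/-!
Write `W s` for the sum of `v i j` over ordered pairs of distinct elements of `s`; we find a
matching `μ` of `s` with `W s ≤ 2 |s| SW(μ)` by strong induction on `n = |s|`. For `n ≤ 2` the
partition into singletons (welfare `0`) or the one-part partition (welfare `W s / n`) will do.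
For `n ≥ 3`, every ordered pair is disjoint from exactly `(n - 2)(n - 3)` ordered pairs, so over
all ordered pairs `(i, j)` the quantity `n (2 (n - 2) SW{i, j} + W (s \ {i, j}))` averages to
exactly `(n - 2) W s`. Matching a pair at least as good as the average and recursing on
`s \ {i, j}` gives the bound.
-/

open Finset

/-- Social welfare of a coalition `C`: `SW(C) = (Σ_{i∈C} Σ_{j∈C, j≠i} v i j) / |C|`. -/
noncomputable def coalSW {α : Type*} [DecidableEq α] (v : α → α → ℝ) (C : Finset α) : ℝ :=
  (∑ i ∈ C, ∑ j ∈ C.erase i, v i j) / (C.card : ℝ)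

/-- Social welfare of a partition: the sum of the social welfares of its parts. -/
noncomputable def partSW {α : Type*} [DecidableEq α] (v : α → α → ℝ) {N : Finset α}
    (π : Finpartition N) : ℝ :=
  ∑ C ∈ π.parts, coalSW v C

/-- A matching is a partition all of whose parts have at most 2 elements.
For a symmetric valuation with zero diagonal, the social welfare of a matching
(as a partition) equals the sum of `v i j` over its two-element parts `{i, j}`. -/
def IsMatching {α : Type*} [DecidableEq α] {N : Finset α} (π : Finpartition N) : Prop :=
  ∀ p ∈ π.parts, p.card ≤ 2

theorem cast_card_offDiag {α R : Type*} [CommRing R] (s : Finset α) :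
    (#s.offDiag : R) = #s * (#s - 1) := by
  rw [offDiag_card, Nat.cast_sub (Nat.le_mul_self _)]
  push_cast
  ring

section

variable {α : Type*} [DecidableEq α]

noncomputable def offDiagSum (v : α → α → ℝ) (s : Finset α) : ℝ :=
  ∑ p ∈ s.offDiag, v p.1 p.2

theorem sum_offDiag_eq_sum_sum_erase {M : Type*} [AddCommMonoid M] (s : Finset α)
    (f : α → α → M) :
    ∑ p ∈ s.offDiag, f p.1 p.2 = ∑ i ∈ s, ∑ j ∈ s.erase i, f i j :=
  sum_finset_product _ _ _ fun p => by simp [mem_offDiag, and_comm, eq_comm, and_left_comm]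

theorem coalSW_eq_offDiagSum_div (v : α → α → ℝ) (s : Finset α) :
    coalSW v s = offDiagSum v s / #s := by
  rw [coalSW, offDiagSum, sum_offDiag_eq_sum_sum_erase]

theorem coalSW_singleton (v : α → α → ℝ) (a : α) : coalSW v {a} = 0 := by
  simp [coalSW_eq_offDiagSum_div, offDiagSum]

theorem coalSW_pair (v : α → α → ℝ) {i j : α} (h : i ≠ j) :
    coalSW v {i, j} = (v i j + v j i) / 2 := by
  have hi : ({i, j} : Finset α).erase i = {j} := erase_insert (by simpa using h)
  have hj : ({i, j} : Finset α).erase j = {i} := by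
    rw [pair_comm]; exact erase_insert (by simpa using h.symm)
  rw [coalSW, card_pair h, sum_pair h, hi, hj, sum_singleton, sum_singleton]
  norm_num

theorem sum_offDiag_coalSW_pair (v : α → α → ℝ) (s : Finset α) :
    ∑ p ∈ s.offDiag, coalSW v {p.1, p.2} = offDiagSum v s := by
  have hswap : ∑ p ∈ s.offDiag, v p.2 p.1 = offDiagSum v s :=
    sum_nbij' Prod.swap Prod.swap (by simp [mem_offDiag, eq_comm, and_left_comm])
      (by simp [mem_offDiag, eq_comm, and_left_comm]) (by simp) (by simp) (by simp)
  rw [sum_congr rfl fun p hp => coalSW_pair v (mem_offDiag.1 hp).2.2, ← sum_div,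
    sum_add_distrib, hswap, offDiagSum]
  ring

theorem card_sdiff_pair_add_two {s : Finset α} {a b : α} (ha : a ∈ s) (hb : b ∈ s)
    (hab : a ≠ b) :
    #(s \ {a, b}) + 2 = #s := by
  rw [← card_pair hab]
  exact card_sdiff_add_card_eq_card (insert_subset ha (singleton_subset_iff.2 hb))

theorem sum_offDiag_offDiagSum_sdiff_pair (v : α → α → ℝ) (s : Finset α) :
    ∑ p ∈ s.offDiag, offDiagSum v (s \ {p.1, p.2}) = (#s - 2) * (#s - 3) * offDiagSum v s := by
  have hcard : ∀ q ∈ s.offDiag, (#(s \ {q.1, q.2}).offDiag : ℝ) = (#s - 2) * (#s - 3) := by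
    intro q hq
    obtain ⟨h1, h2, h12⟩ := mem_offDiag.1 hq
    rw [cast_card_offDiag, ← card_sdiff_pair_add_two h1 h2 h12]
    push_cast
    ring
  unfold offDiagSum
  rw [sum_comm' (t' := s.offDiag) (s' := fun q => (s \ {q.1, q.2}).offDiag), mul_sum]
  · refine sum_congr rfl fun q hq => ?_
    rw [sum_const, nsmul_eq_mul, hcard q hq]
  · intro p q
    simp only [mem_offDiag, mem_sdiff, mem_insert, mem_singleton]
    tauto

theorem exists_mem_offDiag_offDiagSum_le (v : α → α → ℝ) {s : Finset α} (hs : 1 < #s) :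
    ∃ p ∈ s.offDiag, (#s - 2) * offDiagSum v s ≤
      #s * (2 * (#s - 2) * coalSW v {p.1, p.2} + offDiagSum v (s \ {p.1, p.2})) := by
  have hne : s.offDiag.Nonempty := by
    obtain ⟨a, ha, b, hb, hab⟩ := one_lt_card.1 hs
    exact ⟨(a, b), mem_offDiag.2 ⟨ha, hb, hab⟩⟩
  refine exists_le_of_sum_le hne (le_of_eq ?_)
  rw [sum_const, nsmul_eq_mul, ← mul_sum, sum_add_distrib, ← mul_sum, sum_offDiag_coalSW_pair,
    sum_offDiag_offDiagSum_sdiff_pair, cast_card_offDiag]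
  ring

theorem partSW_bot (v : α → α → ℝ) (s : Finset α) :
    partSW v (⊥ : Finpartition s) = 0 := by
  simp [partSW, coalSW_singleton]

theorem isMatching_bot (s : Finset α) : IsMatching (⊥ : Finpartition s) := by
  intro p hp
  obtain ⟨a, -, rfl⟩ := Finpartition.mem_bot_iff.1 hp
  simp

theorem exists_matching_extend (v : α → α → ℝ) {s t : Finset α} (μ : Finpartition (s \ t))
    (hμ : IsMatching μ) (hts : t ⊆ s) (ht : t.Nonempty) (ht2 : #t ≤ 2) :
    ∃ μ' : Finpartition s, IsMatching μ' ∧ partSW v μ' = coalSW v t + partSW v μ := by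
  refine ⟨μ.extend ht.ne_empty sdiff_disjoint (sdiff_sup_cancel hts), ?_, ?_⟩
  · intro p hp
    rcases mem_insert.1 hp with rfl | hp
    exacts [ht2, hμ p hp]
  · have ht_notMem : t ∉ μ.parts := fun h =>
      ht.ne_empty (disjoint_self.1 (sdiff_disjoint.mono_left (μ.le h)))
    rw [partSW, Finpartition.extend_parts, sum_insert ht_notMem]
    rfl

theorem exists_matching_offDiagSum_le_of_card_le_two (v : α → α → ℝ) {s : Finset α}
    (hs : #s ≤ 2) :
    ∃ μ : Finpartition s, IsMatching μ ∧ offDiagSum v s ≤ 2 * #s * partSW v μ := by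
  by_cases hW : offDiagSum v s ≤ 0
  · exact ⟨⊥, isMatching_bot s, by rwa [partSW_bot, mul_zero]⟩
  have hne : s.Nonempty := by
    rw [nonempty_iff_ne_empty]
    rintro rfl
    simp [offDiagSum] at hW
  obtain ⟨μ, hμ, hSW⟩ :=
    exists_matching_extend v (⊥ : Finpartition (s \ s)) (isMatching_bot _) subset_rfl hne hs
  refine ⟨μ, hμ, ?_⟩
  have hcard : (0 : ℝ) < #s := by exact_mod_cast hne.card_pos
  rw [hSW, partSW_bot, add_zero, coalSW_eq_offDiagSum_div, mul_assoc,
    mul_div_cancel₀ _ hcard.ne']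
  linarith

theorem exists_matching_offDiagSum_le (v : α → α → ℝ) (s : Finset α) :
    ∃ μ : Finpartition s, IsMatching μ ∧ offDiagSum v s ≤ 2 * #s * partSW v μ := by
  induction s using Finset.strongInduction with
  | H s ih =>
  by_cases hs : #s ≤ 2
  · exact exists_matching_offDiagSum_le_of_card_le_two v hs
  · obtain ⟨⟨a, b⟩, hab, hle⟩ := exists_mem_offDiag_offDiagSum_le v (by omega : 1 < #s)
    obtain ⟨ha, hb, hne⟩ := mem_offDiag.1 hab
    have hsub : {a, b} ⊆ s := insert_subset ha (singleton_subset_iff.2 hb)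
    obtain ⟨μ', hμ', hW'⟩ := ih _ (sdiff_ssubset hsub (insert_nonempty _ _))
    obtain ⟨μ, hμ, hSW⟩ :=
      exists_matching_extend v μ' hμ' hsub (insert_nonempty _ _) (card_pair hne).le
    refine ⟨μ, hμ, ?_⟩
    have hcard : (#(s \ {a, b}) : ℝ) = #s - 2 := by
      rw [← card_sdiff_pair_add_two ha hb hne]
      push_cast
      ring
    have hpos : (0 : ℝ) < #s - 2 := by
      have : (3 : ℝ) ≤ #s := by exact_mod_cast (by omega : 3 ≤ #s)
      linarith
    rw [hcard] at hW'
    refine le_of_mul_le_mul_left ?_ hpos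
    calc (#s - 2) * offDiagSum v s
        ≤ #s * (2 * (#s - 2) * coalSW v {a, b} + offDiagSum v (s \ {a, b})) := hle
      _ ≤ #s * (2 * (#s - 2) * coalSW v {a, b} + 2 * (#s - 2) * partSW v μ') := by gcongr
      _ = (#s - 2) * (2 * #s * partSW v μ) := by rw [hSW]; ring

end

theorem stmt1_general {α : Type*} [DecidableEq α] (C : Finset α) (hC : C.Nonempty)
    (v : α → α → ℝ) :
    ∃ μ : Finpartition C, IsMatching μ ∧
      (1 / (C.card : ℝ)) * ((∑ p ∈ C.offDiag, v p.1 p.2) / 2) ≤ partSW v μ := by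
  obtain ⟨μ, hμ, hle⟩ := exists_matching_offDiagSum_le v C
  refine ⟨μ, hμ, ?_⟩
  have hcard : (0 : ℝ) < #C := by exact_mod_cast hC.card_pos
  rw [← offDiagSum, one_div_mul_eq_div, div_div, div_le_iff₀ (mul_pos two_pos hcard)]
  linarith

/-- For a nonempty finite set `C` with a symmetric valuation `v`, there is a matching
`μ` of `C` whose social welfare is at least the weight of the uniform fractional
matching: `(1/|C|)·Σ_{{i,j}⊆C, i≠j} v i j ≤ SW(μ)`.  (The sum over unordered pairs of
distinct elements is written as half the sum over ordered pairs `C.offDiag`, which is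
the same for a symmetric valuation.) -/
theorem stmt1 {α : Type*} [DecidableEq α] (C : Finset α) (hC : C.Nonempty)
    (v : α → α → ℝ) (hsymm : ∀ i j, v i j = v j i) (hdiag : ∀ i, v i i = 0) :
    ∃ μ : Finpartition C, IsMatching μ ∧
      (1 / (C.card : ℝ)) * ((∑ p ∈ C.offDiag, v p.1 p.2) / 2) ≤ partSW v μ :=
  stmt1_general C hC v
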